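/- arXiv:1309.4684 — 2 statements merged into one kernel-verified Lean document; each statement's English description precedes it below -/
import Mathlib

section
/- Let X be a Banach space and c ≥ 1. Then X is c-Grothendieck if and only if the (I)-envelope of the closed unit ball B_X contains (1/c)·B_{X**}. -/
open Filter Metric Topology Pointwise

/-- Measure of weak non-cauchyness of a sequence in the dual:
`δ_w(f) = sup_{F ∈ B_{X**}} inf_n sup_{k,l ≥ n} |F(f k) - F(f l)|`. -/
noncomputable def deltaW {X : Type*} [NormedAddCommGroup X] [NormedSpace ℝ X]
    (f : ℕ → X →L[ℝ] ℝ) : ℝ :=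
  ⨆ F : (closedBall (0 : (X →L[ℝ] ℝ) →L[ℝ] ℝ) 1),
    ⨅ n : ℕ, ⨆ p : {p : ℕ × ℕ // n ≤ p.1 ∧ n ≤ p.2},
      |F.1 (f p.1.1) - F.1 (f p.1.2)|

/-- Measure of weak* non-cauchyness of a sequence in the dual:
`δ_{w*}(f) = sup_{x ∈ B_X} inf_n sup_{k,l ≥ n} |f k x - f l x|`. -/
noncomputable def deltaWStar {X : Type*} [NormedAddCommGroup X] [NormedSpace ℝ X]
    (f : ℕ → X →L[ℝ] ℝ) : ℝ :=
  ⨆ x : (closedBall (0 : X) 1),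
    ⨅ n : ℕ, ⨆ p : {p : ℕ × ℕ // n ≤ p.1 ∧ n ≤ p.2},
      |f p.1.1 x.1 - f p.1.2 x.1|

/-- `X` is `c`-Grothendieck if `δ_w(f) ≤ c · δ_{w*}(f)` for every bounded sequence `f` in `X*`. -/
def IsCGrothendieck (c : ℝ) (X : Type*) [NormedAddCommGroup X] [NormedSpace ℝ X] : Prop :=
  ∀ f : ℕ → X →L[ℝ] ℝ, Bornology.IsBounded (Set.range f) → deltaW f ≤ c * deltaWStar f
/-- The weak* closure of a subset of a dual space. -/
noncomputable def wStarClosure {E : Type*} [NormedAddCommGroup E] [NormedSpace ℝ E]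
    (S : Set (E →L[ℝ] ℝ)) : Set (E →L[ℝ] ℝ) :=
  closure (X := WeakDual ℝ E) S

/-- The (I)-envelope of a set `B ⊆ X`, viewed as a subset of the bidual `X**`: the
intersection over all countable decompositions `B = ⋃ n, C n` of the norm closure of the
convex hull of the union of the weak* closures (in `X**`) of the convex hulls of the `C n`. -/
noncomputable def Ienv {X : Type*} [NormedAddCommGroup X] [NormedSpace ℝ X] (B : Set X) :
    Set ((X →L[ℝ] ℝ) →L[ℝ] ℝ) :=
  ⋂ C ∈ {C : ℕ → Set X | B = ⋃ n, C n},
    closure (convexHull ℝ (⋃ n, wStarClosure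
      ((NormedSpace.inclusionInDoubleDual ℝ X) '' (convexHull ℝ (C n)))))

/-!
If `c⁻¹ B_{X**}` lies in the (I)-envelope and `δ_{w*}(f) < a`, split `B_X` into the sets `C n` of
points `x` at which `(f k x)` oscillates by at most `a` from `n` on. The functionals in `X**` with
that property form weak-star closed convex sets increasing in `n`, so `c⁻¹ F` lies in the norm
closure of their union, and `(F (f k))` eventually oscillates by at most `c a`.

Conversely, if `c⁻¹ F` escapes the envelope through a decomposition `(C n)`, separate it from the
weak-star compact convex hulls `K m` of the first `m + 1` sets `w*-cl (conv (C n))` by functionals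
`f m ∈ B_{X*}` with a uniform gap. Each `x ∈ B_X` lies in `K m` for all large `m`, so `c f m (± x)`
stays below `F (f m)` by a fixed margin. Along a subsequence on which `F (f m)` is almost
constant, the sequence `f 0, -f 0, f 1, -f 1, …` then has weak oscillation larger than `c` times
its weak-star oscillation.
-/

/-- Takes the junk value `0` when `φ` is unbounded. -/
noncomputable def tailOsc (φ : ℕ → ℝ) (n : ℕ) : ℝ :=
  ⨆ p : {p : ℕ × ℕ // n ≤ p.1 ∧ n ≤ p.2}, |φ p.1.1 - φ p.1.2|

/-- `deltaW f` and `deltaWStar f` unfold to suprema of `limOsc` of `k ↦ F (f k)` and `k ↦ f k x`. -/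
noncomputable def limOsc (φ : ℕ → ℝ) : ℝ := ⨅ n, tailOsc φ n

section Oscillation

variable {φ : ℕ → ℝ} {R a : ℝ}

instance (n : ℕ) : Nonempty {p : ℕ × ℕ // n ≤ p.1 ∧ n ≤ p.2} := ⟨⟨(n, n), le_rfl, le_rfl⟩⟩

lemma tailOsc_nonneg (n : ℕ) : 0 ≤ tailOsc φ n :=
  Real.iSup_nonneg fun _ => abs_nonneg _

lemma limOsc_le {n : ℕ} (h : ∀ k ≥ n, ∀ l ≥ n, |φ k - φ l| ≤ a) : limOsc φ ≤ a :=
  (ciInf_le ⟨0, Set.forall_mem_range.2 tailOsc_nonneg⟩ n).trans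
    (ciSup_le fun p => h _ p.2.1 _ p.2.2)

lemma limOsc_le_two_mul (h : ∀ᶠ k in atTop, |φ k| ≤ a) : limOsc φ ≤ 2 * a := by
  obtain ⟨n, hn⟩ := eventually_atTop.1 h
  refine limOsc_le (n := n) fun k hk l hl => ?_
  linarith [abs_sub (φ k) (φ l), hn k hk, hn l hl]

lemma abs_sub_le_tailOsc (hφ : ∀ k, |φ k| ≤ R) {n k l : ℕ} (hk : n ≤ k) (hl : n ≤ l) :
    |φ k - φ l| ≤ tailOsc φ n := by
  refine le_ciSup (f := fun p : {p : ℕ × ℕ // n ≤ p.1 ∧ n ≤ p.2} => |φ p.1.1 - φ p.1.2|)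
    ⟨2 * R, ?_⟩ ⟨(k, l), hk, hl⟩
  rintro _ ⟨p, rfl⟩
  linarith [abs_sub (φ p.1.1) (φ p.1.2), hφ p.1.1, hφ p.1.2]

lemma exists_forall_abs_sub_le_of_limOsc_lt (hφ : ∀ k, |φ k| ≤ R) (h : limOsc φ < a) :
    ∃ n, ∀ k ≥ n, ∀ l ≥ n, |φ k - φ l| ≤ a := by
  obtain ⟨n, hn⟩ := exists_lt_of_ciInf_lt h
  exact ⟨n, fun k hk l hl => (abs_sub_le_tailOsc hφ hk hl).trans hn.le⟩

lemma le_limOsc (hφ : ∀ k, |φ k| ≤ R) (h : ∀ n, ∃ k ≥ n, ∃ l ≥ n, a ≤ |φ k - φ l|) :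
    a ≤ limOsc φ :=
  le_ciInf fun n => by
    obtain ⟨k, hk, l, hl, hkl⟩ := h n
    exact hkl.trans (abs_sub_le_tailOsc hφ hk hl)

end Oscillation

lemma abs_apply_le_mul {E : Type*} [NormedAddCommGroup E] [NormedSpace ℝ E] {φ : E →L[ℝ] ℝ}
    {x : E} {a b : ℝ} (hφ : ‖φ‖ ≤ a) (hx : ‖x‖ ≤ b) : |φ x| ≤ a * b := by
  rw [← Real.norm_eq_abs]
  exact (φ.le_opNorm_of_le hx).trans
    (mul_le_mul_of_nonneg_right hφ ((norm_nonneg x).trans hx))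

section Deltas

variable {X : Type*} [NormedAddCommGroup X] [NormedSpace ℝ X] {f : ℕ → X →L[ℝ] ℝ} {M a : ℝ}

instance {E : Type*} [SeminormedAddCommGroup E] : Nonempty (closedBall (0 : E) 1) :=
  ⟨⟨0, mem_closedBall_self zero_le_one⟩⟩

lemma deltaW_le (h : ∀ F ∈ closedBall (0 : (X →L[ℝ] ℝ) →L[ℝ] ℝ) 1, limOsc (fun k => F (f k)) ≤ a) :
    deltaW f ≤ a :=
  ciSup_le fun F => h F.1 F.2

lemma deltaWStar_le (h : ∀ x ∈ closedBall (0 : X) 1, limOsc (fun k => f k x) ≤ a) :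
    deltaWStar f ≤ a :=
  ciSup_le fun x => h x.1 x.2

lemma limOsc_le_deltaW (hf : ∀ k, ‖f k‖ ≤ M) {F : (X →L[ℝ] ℝ) →L[ℝ] ℝ}
    (hF : F ∈ closedBall 0 1) : limOsc (fun k => F (f k)) ≤ deltaW f := by
  refine le_ciSup (f := fun F : closedBall (0 : (X →L[ℝ] ℝ) →L[ℝ] ℝ) 1 =>
    limOsc fun k => F.1 (f k)) ⟨2 * (1 * M), ?_⟩ ⟨F, hF⟩
  rintro _ ⟨G, rfl⟩
  exact limOsc_le_two_mul (.of_forall fun k =>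
    abs_apply_le_mul (mem_closedBall_zero_iff.1 G.2) (hf k))

lemma limOsc_le_deltaWStar (hf : ∀ k, ‖f k‖ ≤ M) {x : X} (hx : x ∈ closedBall 0 1) :
    limOsc (fun k => f k x) ≤ deltaWStar f := by
  refine le_ciSup (f := fun x : closedBall (0 : X) 1 => limOsc fun k => f k x.1)
    ⟨2 * (M * 1), ?_⟩ ⟨x, hx⟩
  rintro _ ⟨y, rfl⟩
  exact limOsc_le_two_mul (.of_forall fun k =>
    abs_apply_le_mul (hf k) (mem_closedBall_zero_iff.1 y.2))

end Deltas

def tailOscSet {E : Type*} [NormedAddCommGroup E] [NormedSpace ℝ E] (v : ℕ → E) (n : ℕ) (a : ℝ) :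
    Set (E →L[ℝ] ℝ) :=
  {φ | ∀ k ≥ n, ∀ l ≥ n, |φ (v k) - φ (v l)| ≤ a}

section TailOscSet

variable {E : Type*} [NormedAddCommGroup E] [NormedSpace ℝ E] {v : ℕ → E} {n : ℕ} {a : ℝ}

lemma convex_tailOscSet : Convex ℝ (tailOscSet v n a) := by
  intro φ hφ ψ hψ s t hs ht hst k hk l hl
  calc |(s • φ + t • ψ) (v k) - (s • φ + t • ψ) (v l)|
      = |s * (φ (v k) - φ (v l)) + t * (ψ (v k) - ψ (v l))| := by
        simp only [add_apply, smul_apply, smul_eq_mul]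
        ring_nf
    _ ≤ s * a + t * a := by
        refine (abs_add_le _ _).trans ?_
        rw [abs_mul, abs_mul, abs_of_nonneg hs, abs_of_nonneg ht]
        gcongr
        exacts [hφ k hk l hl, hψ k hk l hl]
    _ = a := by rw [← add_mul, hst, one_mul]

lemma isClosed_tailOscSet : IsClosed (X := WeakDual ℝ E) (tailOscSet v n a) := by
  simp only [tailOscSet, Set.ofPred_forall]
  refine isClosed_biInter fun k _ => isClosed_biInter fun l _ => isClosed_le ?_ continuous_const
  exact ((WeakDual.eval_continuous (v k)).sub (WeakDual.eval_continuous (v l))).abs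

lemma tailOscSet_mono {m : ℕ} {b : ℝ} (hnm : n ≤ m) (hab : a ≤ b) :
    tailOscSet v n a ⊆ tailOscSet v m b :=
  fun _ hφ k hk l hl => (hφ k (hnm.trans hk) l (hnm.trans hl)).trans hab

lemma monotone_tailOscSet : Monotone fun n => tailOscSet v n a :=
  fun _ _ hnm => tailOscSet_mono hnm le_rfl

lemma convex_iUnion_tailOscSet : Convex ℝ (⋃ n, tailOscSet v n a) :=
  monotone_tailOscSet.directed_le.convex_iUnion fun _ => convex_tailOscSet

lemma smul_mem_tailOscSet {φ : E →L[ℝ] ℝ} (hφ : φ ∈ tailOscSet v n a) {r : ℝ} (hr : 0 ≤ r) :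
    r • φ ∈ tailOscSet v n (r * a) := fun k hk l hl => by
  simp only [smul_apply, smul_eq_mul, ← mul_sub, abs_mul, abs_of_nonneg hr]
  exact mul_le_mul_of_nonneg_left (hφ k hk l hl) hr

lemma mem_tailOscSet_of_dist_le {M : ℝ} (hv : ∀ k, ‖v k‖ ≤ M) {φ ψ : E →L[ℝ] ℝ}
    (hψ : ψ ∈ tailOscSet v n a) {r : ℝ} (hr : dist φ ψ ≤ r) :
    φ ∈ tailOscSet v n (a + 2 * (r * M)) := by
  intro k hk l hl
  have hclose : ∀ j, |φ (v j) - ψ (v j)| ≤ r * M := fun j =>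
    abs_apply_le_mul (φ := φ - ψ) (by rwa [← dist_eq_norm]) (hv j)
  have hk' := abs_le.1 (hclose k)
  have hl' := abs_le.1 (hclose l)
  have hψ' := abs_le.1 (hψ k hk l hl)
  exact abs_le.2 ⟨by linarith, by linarith⟩

lemma exists_mem_tailOscSet_of_mem_closure {M b : ℝ} (hv : ∀ k, ‖v k‖ ≤ M) {φ : E →L[ℝ] ℝ}
    (hφ : φ ∈ closure (⋃ n, tailOscSet v n a)) (hab : a < b) : ∃ n, φ ∈ tailOscSet v n b := by
  have hM : 0 ≤ M := (norm_nonneg _).trans (hv 0)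
  set r := (b - a) / (2 * (M + 1)) with hr_def
  have hr : 0 < r := div_pos (sub_pos.2 hab) (by positivity)
  have hrb : a + 2 * (r * M) ≤ b := calc
    a + 2 * (r * M) ≤ a + 2 * (r * (M + 1)) := by gcongr; linarith
    _ = b := by rw [hr_def]; field_simp; ring
  obtain ⟨ψ, hψ, hdist⟩ := Metric.mem_closure_iff.1 hφ r hr
  obtain ⟨n, hψn⟩ := Set.mem_iUnion.1 hψ
  exact ⟨n, tailOscSet_mono le_rfl hrb (mem_tailOscSet_of_dist_le hv hψn hdist.le)⟩

end TailOscSet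

section WeakStarClosure

variable {E : Type*} [NormedAddCommGroup E] [NormedSpace ℝ E] {S : Set (E →L[ℝ] ℝ)}

lemma convex_wStarClosure (hS : Convex ℝ S) : Convex ℝ (wStarClosure S) :=
  Convex.closure (E := WeakDual ℝ E) hS

lemma wStarClosure_subset {T : Set (E →L[ℝ] ℝ)} (hST : S ⊆ T)
    (hT : IsClosed (X := WeakDual ℝ E) T) : wStarClosure S ⊆ T :=
  closure_minimal (X := WeakDual ℝ E) hST hT

lemma subset_wStarClosure : S ⊆ wStarClosure S :=
  subset_closure (X := WeakDual ℝ E)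

lemma isCompact_wStarClosure {r : ℝ} (hS : wStarClosure S ⊆ closedBall 0 r) :
    IsCompact (X := WeakDual ℝ E) (wStarClosure S) :=
  (WeakDual.isCompact_closedBall 0 r).of_isClosed_subset isClosed_closure hS

variable {X : Type*} [NormedAddCommGroup X] [NormedSpace ℝ X]

lemma inclusionInDoubleDual_mem_closedBall {x : X} {r : ℝ} (hx : x ∈ closedBall 0 r) :
    NormedSpace.inclusionInDoubleDual ℝ X x ∈ closedBall (0 : (X →L[ℝ] ℝ) →L[ℝ] ℝ) r :=
  (dist_zero_right (NormedSpace.inclusionInDoubleDual ℝ X x)).trans_le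
    ((NormedSpace.double_dual_bound ℝ X x).trans (mem_closedBall_zero_iff.1 hx))

lemma wStarClosure_image_convexHull_subset {C : Set X} {T : Set ((X →L[ℝ] ℝ) →L[ℝ] ℝ)}
    (hT : Convex ℝ T) (hTc : IsClosed (X := WeakDual ℝ (X →L[ℝ] ℝ)) T)
    (hC : ∀ x ∈ C, NormedSpace.inclusionInDoubleDual ℝ X x ∈ T) :
    wStarClosure (NormedSpace.inclusionInDoubleDual ℝ X '' convexHull ℝ C) ⊆ T :=
  wStarClosure_subset (Set.image_subset_iff.2 <| convexHull_min hC <|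
    hT.linear_preimage (NormedSpace.inclusionInDoubleDual ℝ X).toLinearMap) hTc

end WeakStarClosure

theorem isCGrothendieck_of_smul_closedBall_subset_ienv {X : Type*} [NormedAddCommGroup X]
    [NormedSpace ℝ X] {c : ℝ} (hc : 0 < c)
    (h : c⁻¹ • closedBall (0 : (X →L[ℝ] ℝ) →L[ℝ] ℝ) 1 ⊆ Ienv (closedBall (0 : X) 1)) :
    IsCGrothendieck c X := by
  intro f hf
  obtain ⟨M, hM⟩ := isBounded_iff_forall_norm_le.1 hf
  replace hM : ∀ k, ‖f k‖ ≤ M := fun k => hM _ ⟨k, rfl⟩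
  refine deltaW_le fun F hF => ?_
  have key : ∀ b > deltaWStar f, ∃ n, c⁻¹ • F ∈ tailOscSet f n b := by
    intro b hb
    obtain ⟨a, hδa, hab⟩ := exists_between hb
    set C : ℕ → Set X := fun n =>
      closedBall 0 1 ∩ NormedSpace.inclusionInDoubleDual ℝ X ⁻¹' tailOscSet f n a
    have hcover : closedBall (0 : X) 1 = ⋃ n, C n := by
      refine Set.Subset.antisymm (fun x hx => ?_) (Set.iUnion_subset fun n => Set.inter_subset_left)
      obtain ⟨n, hn⟩ := exists_forall_abs_sub_le_of_limOsc_lt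
        (fun k => abs_apply_le_mul (hM k) (mem_closedBall_zero_iff.1 hx))
        ((limOsc_le_deltaWStar hM hx).trans_lt hδa)
      exact Set.mem_iUnion.2 ⟨n, hx, hn⟩
    have hmem := Set.mem_iInter₂.1 (h (Set.smul_mem_smul_set hF)) C hcover
    refine exists_mem_tailOscSet_of_mem_closure hM (closure_mono ?_ hmem) hab
    exact convexHull_min (Set.iUnion_mono fun n => wStarClosure_image_convexHull_subset
      convex_tailOscSet isClosed_tailOscSet fun x hx => hx.2) convex_iUnion_tailOscSet
  refine le_of_forall_gt_imp_ge_of_dense fun b hb => ?_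
  obtain ⟨n, hn⟩ := key (b / c) ((lt_div_iff₀' hc).2 hb)
  have hF' := smul_mem_tailOscSet hn hc.le
  rw [smul_inv_smul₀ hc.ne', mul_div_cancel₀ _ hc.ne'] at hF'
  exact limOsc_le hF'

section CompactConvexHull

variable {W : Type*} [AddCommGroup W] [Module ℝ W] [TopologicalSpace W] [ContinuousAdd W]
  [ContinuousSMul ℝ W]

lemma isCompact_convexJoin {A B : Set W} (hA : IsCompact A) (hB : IsCompact B) :
    IsCompact (convexJoin ℝ A B) := by
  have : convexJoin ℝ A B =
      (fun p : W × W × ℝ => (1 - p.2.2) • p.1 + p.2.2 • p.2.1) '' A ×ˢ B ×ˢ Set.Icc 0 1 := by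
    ext z
    simp [mem_convexJoin, segment_eq_image, and_assoc]
  rw [this]
  exact (hA.prod (hB.prod isCompact_Icc)).image (by fun_prop)

lemma isCompact_convexHull_union {A B : Set W} (hAc : Convex ℝ A) (hBc : Convex ℝ B)
    (hA : IsCompact A) (hB : IsCompact B) : IsCompact (convexHull ℝ (A ∪ B)) := by
  rcases A.eq_empty_or_nonempty with rfl | hA₀
  · simpa [hBc.convexHull_eq] using hB
  rcases B.eq_empty_or_nonempty with rfl | hB₀
  · simpa [hAc.convexHull_eq] using hA
  rw [hAc.convexHull_union hBc hA₀ hB₀]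
  exact isCompact_convexJoin hA hB

lemma isCompact_convexHull_biUnion {ι : Type*} {D : ι → Set W} (s : Finset ι)
    (hconv : ∀ i ∈ s, Convex ℝ (D i)) (hcomp : ∀ i ∈ s, IsCompact (D i)) :
    IsCompact (convexHull ℝ (⋃ i ∈ s, D i)) := by
  classical
  induction s using Finset.induction_on with
  | empty => simp
  | insert i s _ ih =>
    rw [Finset.set_biUnion_insert, ← convexHull_convexHull_union_right]
    exact isCompact_convexHull_union (hconv i (s.mem_insert_self i)) (convex_convexHull ℝ _)
      (hcomp i (s.mem_insert_self i)) (ih (fun j hj => hconv j (Finset.mem_insert_of_mem hj))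
        fun j hj => hcomp j (Finset.mem_insert_of_mem hj))

end CompactConvexHull

theorem exists_norm_le_one_forall_apply_add_le {E : Type*} [NormedAddCommGroup E]
    [NormedSpace ℝ E] {K : Set (E →L[ℝ] ℝ)} (hKconv : Convex ℝ K)
    (hKcomp : IsCompact (X := WeakDual ℝ E) K) {G : E →L[ℝ] ℝ} {ε : ℝ} (hε : 0 ≤ ε)
    (hdisj : Disjoint K (closedBall G ε)) : ∃ g : E, ‖g‖ ≤ 1 ∧ ∀ H ∈ K, H g + ε ≤ G g := by
  have : LocallyConvexSpace ℝ (WeakDual ℝ E) := WeakBilin.locallyConvexSpace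
  obtain ⟨φ, u, v, hφK, huv, hφB⟩ := geometric_hahn_banach_compact_closed (E := WeakDual ℝ E)
    hKconv hKcomp (convex_closedBall G ε) (WeakDual.isClosed_closedBall G ε) hdisj
  obtain ⟨g, rfl⟩ := LinearMap.dualEmbedding_surjective (topDualPairing ℝ E) φ
  obtain ⟨G', hG'norm, hG'g⟩ := exists_dual_vector'' ℝ g
  -- The point `G - ε G'` of the ball lowers the value at `g` by exactly `ε ‖g‖`.
  have hgap : ∀ H ∈ K, H g + ε * ‖g‖ < G g := by
    intro H hH
    have hball : G - ε • G' ∈ closedBall G ε := by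
      rw [mem_closedBall, dist_eq_norm, sub_sub_cancel_left, norm_neg, norm_smul,
        Real.norm_of_nonneg hε]
      exact mul_le_of_le_one_right hε hG'norm
    have h1 : H g < u := hφK H hH
    have h2 : v < (G - ε • G') g := hφB _ hball
    rw [sub_apply, smul_apply, hG'g, smul_eq_mul, RCLike.ofReal_real_eq_id, id] at h2
    linarith
  rcases eq_or_ne g 0 with rfl | hg
  · exact ⟨0, by simp, fun H hH => absurd (hgap H hH) (by simp)⟩
  refine ⟨‖g‖⁻¹ • g, (norm_smul_inv_norm hg).le, fun H hH => ?_⟩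
  have hpos : 0 < ‖g‖ := norm_pos_iff.2 hg
  rw [map_smul, map_smul, smul_eq_mul, smul_eq_mul, ← mul_le_mul_iff_of_pos_left hpos, mul_add,
    mul_inv_cancel_left₀ hpos.ne', mul_inv_cancel_left₀ hpos.ne']
  linarith [hgap H hH]

lemma exists_strictMono_abs_sub_le {u : ℕ → ℝ} {R η : ℝ} (hu : ∀ m, |u m| ≤ R) (hη : 0 < η) :
    ∃ t, ∃ ψ : ℕ → ℕ, StrictMono ψ ∧ ∀ j, |u (ψ j) - t| ≤ η := by
  obtain ⟨t, -, ψ, hψ, hlim⟩ := tendsto_subseq_of_bounded (isBounded_closedBall (x := 0) (r := R))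
    fun m => mem_closedBall_zero_iff.2 ((Real.norm_eq_abs _).trans_le (hu m))
  obtain ⟨j₀, hj₀⟩ := Metric.tendsto_atTop.1 hlim η hη
  exact ⟨t, fun j => ψ (j + j₀), hψ.comp fun _ _ h => Nat.add_lt_add_right h j₀,
    fun j => (hj₀ _ (Nat.le_add_left j₀ j)).le⟩

def altSeq {E : Type*} [AddCommGroup E] [Module ℝ E] (f : ℕ → E) (k : ℕ) : E :=
  (-1 : ℝ) ^ k • f (k / 2)

section AltSeq

variable {X : Type*} [NormedAddCommGroup X] [NormedSpace ℝ X] {f : ℕ → X →L[ℝ] ℝ} {M s : ℝ}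

lemma norm_altSeq (k : ℕ) : ‖altSeq f k‖ = ‖f (k / 2)‖ := by
  simp [altSeq, norm_smul]

lemma abs_altSeq_apply (k : ℕ) (x : X) : |altSeq f k x| = |f (k / 2) x| := by
  simp [altSeq, abs_mul]

lemma map_altSeq_two_mul_sub (F : (X →L[ℝ] ℝ) →L[ℝ] ℝ) (j : ℕ) :
    F (altSeq f (2 * j)) - F (altSeq f (2 * j + 1)) = 2 * F (f j) := by
  have h₀ : 2 * j / 2 = j := by omega
  have h₁ : (2 * j + 1) / 2 = j := by omega
  simp only [altSeq, h₀, h₁, pow_mul, pow_succ, pow_zero, mul_neg, mul_one, neg_neg, one_pow,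
    one_smul, map_smul, smul_eq_mul, neg_mul, one_mul, sub_neg_eq_add]
  ring

lemma isBounded_range_altSeq (hf : ∀ m, ‖f m‖ ≤ M) : Bornology.IsBounded (Set.range (altSeq f)) :=
  isBounded_iff_forall_norm_le.2
    ⟨M, Set.forall_mem_range.2 fun k => (norm_altSeq k).trans_le (hf _)⟩

lemma deltaWStar_altSeq_le (h : ∀ x ∈ closedBall (0 : X) 1, ∀ᶠ m in atTop, |f m x| ≤ s) :
    deltaWStar (altSeq f) ≤ 2 * s :=
  deltaWStar_le fun x hx => limOsc_le_two_mul <| by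
    filter_upwards [(Nat.tendsto_div_const_atTop two_ne_zero).eventually (h x hx)] with k hk
    rwa [abs_altSeq_apply]

lemma two_mul_le_deltaW_altSeq (hf : ∀ m, ‖f m‖ ≤ M) {F : (X →L[ℝ] ℝ) →L[ℝ] ℝ}
    (hF : F ∈ closedBall 0 1) (hs : ∀ m, s ≤ F (f m)) : 2 * s ≤ deltaW (altSeq f) := by
  have hg : ∀ k, ‖altSeq f k‖ ≤ M := fun k => (norm_altSeq k).trans_le (hf _)
  refine (le_limOsc (fun k => abs_apply_le_mul (mem_closedBall_zero_iff.1 hF) (hg k))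
    fun n => ⟨2 * n, by omega, 2 * n + 1, by omega, ?_⟩).trans (limOsc_le_deltaW hg hF)
  rw [map_altSeq_two_mul_sub]
  exact le_abs.2 (Or.inl (by linarith [hs n]))

end AltSeq

theorem not_isCGrothendieck_of_eventually_add_le {X : Type*} [NormedAddCommGroup X]
    [NormedSpace ℝ X] {c ε : ℝ} (hc : 0 < c) (hε : 0 < ε) {f : ℕ → X →L[ℝ] ℝ}
    (hf : ∀ m, ‖f m‖ ≤ 1) {F : (X →L[ℝ] ℝ) →L[ℝ] ℝ} (hF : F ∈ closedBall 0 1)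
    (hgap : ∀ x ∈ closedBall (0 : X) 1, ∀ᶠ m in atTop, c * f m x + ε ≤ F (f m)) :
    ¬ IsCGrothendieck c X := by
  intro hG
  obtain ⟨t, ψ, hψ, ht⟩ := exists_strictMono_abs_sub_le
    (fun m => abs_apply_le_mul (mem_closedBall_zero_iff.1 hF) (hf m)) (show 0 < ε / 4 by positivity)
  have hupper : deltaWStar (altSeq fun j => f (ψ j)) ≤ 2 * ((t - 3 * ε / 4) / c) := by
    refine deltaWStar_altSeq_le fun x hx => ?_
    have hneg : -x ∈ closedBall (0 : X) 1 := by
      rwa [mem_closedBall_zero_iff, norm_neg, ← mem_closedBall_zero_iff]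
    filter_upwards [hψ.tendsto_atTop.eventually (hgap x hx),
      hψ.tendsto_atTop.eventually (hgap (-x) hneg)] with j hx₁ hx₂
    rw [map_neg, mul_neg] at hx₂
    have hcx : |c * f (ψ j) x| ≤ t - 3 * ε / 4 :=
      abs_le.2 ⟨by linarith [abs_le.1 (ht j)], by linarith [abs_le.1 (ht j)]⟩
    rwa [abs_mul, abs_of_pos hc, ← le_div_iff₀' hc] at hcx
  have hlower : 2 * (t - ε / 4) ≤ deltaW (altSeq fun j => f (ψ j)) :=
    two_mul_le_deltaW_altSeq (fun m => hf (ψ m)) hF fun j => by linarith [abs_le.1 (ht j)]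
  have hcancel : c * (2 * ((t - 3 * ε / 4) / c)) = 2 * (t - 3 * ε / 4) := by field_simp
  linarith [hG _ (isBounded_range_altSeq fun m => hf (ψ m)),
    mul_le_mul_of_nonneg_left hupper hc.le]

theorem IsCGrothendieck.smul_closedBall_subset_ienv {X : Type*} [NormedAddCommGroup X]
    [NormedSpace ℝ X] {c : ℝ} (hc : 0 < c) (hG : IsCGrothendieck c X) :
    c⁻¹ • closedBall (0 : (X →L[ℝ] ℝ) →L[ℝ] ℝ) 1 ⊆ Ienv (closedBall (0 : X) 1) := by
  intro _ hcF
  obtain ⟨F, hF, rfl⟩ := Set.mem_smul_set.1 hcF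
  refine Set.mem_iInter₂.2 fun C (hcover : closedBall 0 1 = ⋃ n, C n) => ?_
  set J := NormedSpace.inclusionInDoubleDual ℝ X
  set D : ℕ → Set ((X →L[ℝ] ℝ) →L[ℝ] ℝ) := fun n => wStarClosure (J '' convexHull ℝ (C n))
  by_contra hnot
  obtain ⟨ε, hε, hfar⟩ : ∃ ε > 0, ∀ H ∈ convexHull ℝ (⋃ n, D n), ε ≤ dist (c⁻¹ • F) H := by
    have : ¬ ∀ ε > 0, ∃ H ∈ convexHull ℝ (⋃ n, D n), dist (c⁻¹ • F) H < ε :=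
      fun h => hnot (Metric.mem_closure_iff.2 h)
    push Not at this
    exact this
  have hD_ball : ∀ n, D n ⊆ closedBall 0 1 := fun n =>
    wStarClosure_image_convexHull_subset (convex_closedBall (0 : (X →L[ℝ] ℝ) →L[ℝ] ℝ) 1)
      (WeakDual.isClosed_closedBall 0 1)
      fun x hx => inclusionInDoubleDual_mem_closedBall (hcover ▸ Set.mem_iUnion_of_mem n hx)
  have hD_convex : ∀ n, Convex ℝ (D n) := fun n =>
    convex_wStarClosure ((convex_convexHull ℝ _).linear_image J.toLinearMap)
  have hsep : ∀ m, ∃ g : X →L[ℝ] ℝ, ‖g‖ ≤ 1 ∧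
      ∀ H ∈ convexHull ℝ (⋃ n ∈ Finset.range (m + 1), D n), H g + ε / 2 ≤ (c⁻¹ • F) g := by
    intro m
    refine exists_norm_le_one_forall_apply_add_le (convex_convexHull ℝ _)
      (isCompact_convexHull_biUnion (W := WeakDual ℝ (X →L[ℝ] ℝ)) _ (fun n _ => hD_convex n)
        fun n _ => isCompact_wStarClosure (hD_ball n)) (half_pos hε).le
      (Set.disjoint_left.2 fun H hH hHF => ?_)
    have := hfar H (convexHull_mono (Set.iUnion₂_subset fun n _ => Set.subset_iUnion D n) hH)
    rw [mem_closedBall, dist_comm] at hHF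
    linarith
  choose f hf_norm hf_sep using hsep
  refine not_isCGrothendieck_of_eventually_add_le hc (mul_pos hc (half_pos hε)) hf_norm hF
    (fun x hx => ?_) hG
  obtain ⟨n, hn⟩ := Set.mem_iUnion.1 (hcover ▸ hx)
  filter_upwards [eventually_ge_atTop n] with m hm
  have hJx := hf_sep m (J x) <| subset_convexHull ℝ _ <|
    Set.mem_biUnion (Finset.mem_range.2 (Nat.lt_succ_of_le hm)) <|
      subset_wStarClosure (Set.mem_image_of_mem J (subset_convexHull ℝ _ hn))
  rw [smul_apply, smul_eq_mul, NormedSpace.dual_def] at hJx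
  calc c * f m x + c * (ε / 2) = c * (f m x + ε / 2) := by ring
    _ ≤ c * (c⁻¹ * F (f m)) := by gcongr
    _ = F (f m) := mul_inv_cancel_left₀ hc.ne' _

theorem isCGrothendieck_iff_ienv_general {X : Type*} [NormedAddCommGroup X] [NormedSpace ℝ X]
    (c : ℝ) (hc : 1 ≤ c) :
    IsCGrothendieck c X ↔
      c⁻¹ • closedBall (0 : (X →L[ℝ] ℝ) →L[ℝ] ℝ) 1 ⊆ Ienv (closedBall (0 : X) 1) := by
  have hc₀ : 0 < c := zero_lt_one.trans_le hc
  exact ⟨fun hG => hG.smul_closedBall_subset_ienv hc₀,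
    isCGrothendieck_of_smul_closedBall_subset_ienv hc₀⟩

/-- A Banach space `X` is `c`-Grothendieck if and only if the (I)-envelope of its closed
unit ball contains `(1/c) · B_{X**}`. -/
theorem isCGrothendieck_iff_ienv {X : Type*} [NormedAddCommGroup X] [NormedSpace ℝ X]
    [CompleteSpace X] (c : ℝ) (hc : 1 ≤ c) :
    IsCGrothendieck c X ↔
      c⁻¹ • closedBall (0 : (X →L[ℝ] ℝ) →L[ℝ] ℝ) 1 ⊆ Ienv (closedBall (0 : X) 1) :=
  isCGrothendieck_iff_ienv_general c hc
end

section
/- Let X be a separable nonreflexive Banach space and c ≥ 1. Then X is not c-Grothendieck. -/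
open Filter Metric Topology

/-!
Riesz's lemma gives `F` in the unit sphere of `X**` at distance more than `1/2` from `X`. For every
finite set in `X`, Hahn–Banach (in `X*`, applied to the restriction of `F` to the annihilator of
the set) gives `f` in the unit ball of `X*` vanishing on the set with `|F f| > 1/2`. Taking these
finite sets to be initial segments of a dense sequence yields a bounded weak*-null sequence;
interlacing it with zeros, `δ_{w*} = 0` while `F` sees oscillation at least `1/2`, so `δ_w ≥ 1/2`.
-/

open NormedSpace

/-- `deltaW f` and `deltaWStar f` are, unfolded, suprema of `tailOscillation (fun n => F (f n))`
over `F ∈ B_{X**}` and of `tailOscillation (fun n => f n x)` over `x ∈ B_X`. -/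
noncomputable def tailOscillation (a : ℕ → ℝ) : ℝ :=
  ⨅ n : ℕ, ⨆ p : {p : ℕ × ℕ // n ≤ p.1 ∧ n ≤ p.2}, |a p.1.1 - a p.1.2|

section tailOscillation

variable {a : ℕ → ℝ}

theorem tailOscillation_le_iSup (a : ℕ → ℝ) (n : ℕ) :
    tailOscillation a ≤ ⨆ p : {p : ℕ × ℕ // n ≤ p.1 ∧ n ≤ p.2}, |a p.1.1 - a p.1.2| :=
  ciInf_le ⟨0, by rintro _ ⟨m, rfl⟩; exact Real.iSup_nonneg fun _ => abs_nonneg _⟩ n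

theorem tailOscillation_nonneg (a : ℕ → ℝ) : 0 ≤ tailOscillation a :=
  Real.iInf_nonneg fun _ => Real.iSup_nonneg fun _ => abs_nonneg _

theorem CauchySeq.tailOscillation_eq_zero (ha : CauchySeq a) : tailOscillation a = 0 := by
  refine le_antisymm (le_of_forall_gt_imp_ge_of_dense fun ε hε => ?_) (tailOscillation_nonneg a)
  obtain ⟨N, hN⟩ := Metric.cauchySeq_iff.1 ha ε hε
  refine (tailOscillation_le_iSup a N).trans (Real.iSup_le (fun p => ?_) hε.le)
  simpa [Real.dist_eq] using (hN _ p.2.1 _ p.2.2).le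

theorem tailOscillation_le {M : ℝ} (ha : ∀ n, |a n| ≤ M) : tailOscillation a ≤ 2 * M :=
  (tailOscillation_le_iSup a 0).trans <|
    Real.iSup_le (fun p => (abs_sub _ _).trans (by linarith [ha p.1.1, ha p.1.2]))
      (by linarith [abs_nonneg (a 0), ha 0])

theorem le_tailOscillation {M ε : ℝ} (ha : ∀ n, |a n| ≤ M)
    (h : ∀ n, ∃ k ≥ n, ∃ l ≥ n, ε ≤ |a k - a l|) : ε ≤ tailOscillation a := by
  refine le_ciInf fun n => ?_
  obtain ⟨k, hk, l, hl, hε⟩ := h n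
  refine le_ciSup_of_le ⟨2 * M, ?_⟩ ⟨(k, l), hk, hl⟩ hε
  rintro _ ⟨p, rfl⟩
  exact (abs_sub _ _).trans (by linarith [ha p.1.1, ha p.1.2])

end tailOscillation

section deltaW

variable {X : Type*} [NormedAddCommGroup X] [NormedSpace ℝ X] {f : ℕ → StrongDual ℝ X}

theorem deltaWStar_eq_zero (hf : ∀ x, CauchySeq fun n => f n x) : deltaWStar f = 0 := by
  change ⨆ x : closedBall (0 : X) 1, tailOscillation (fun n => f n x.1) = 0
  simp only [(hf _).tailOscillation_eq_zero, Real.iSup_const_zero]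

theorem tailOscillation_le_deltaW {C : ℝ} (hf : ∀ n, ‖f n‖ ≤ C)
    {F : StrongDual ℝ (StrongDual ℝ X)} (hF : ‖F‖ ≤ 1) :
    tailOscillation (fun n => F (f n)) ≤ deltaW f := by
  change _ ≤ ⨆ G : closedBall (0 : StrongDual ℝ (StrongDual ℝ X)) 1,
    tailOscillation (fun n => G.1 (f n))
  refine le_ciSup_of_le ⟨2 * C, ?_⟩ ⟨F, (dist_zero_right F).trans_le hF⟩ le_rfl
  rintro _ ⟨⟨G, hG⟩, rfl⟩
  refine tailOscillation_le fun n => ?_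
  simpa using G.le_of_opNorm_le_of_le ((dist_zero_right G).symm.trans_le hG) (hf n)

end deltaW

section Dual

variable {𝕜 : Type*} [RCLike 𝕜]

theorem exists_norm_le_one_forall_eq_zero_lt_norm_apply {V : Type*} [NormedAddCommGroup V]
    [NormedSpace 𝕜 V] {ι : Type*} [Fintype ι] (φ : ι → StrongDual 𝕜 V) {F : StrongDual 𝕜 V}
    {r : ℝ} (hF : ∀ c : ι → 𝕜, r < ‖F - ∑ i, c i • φ i‖) :
    ∃ v : V, ‖v‖ ≤ 1 ∧ (∀ i, φ i v = 0) ∧ r < ‖F v‖ := by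
  let Z : Submodule 𝕜 V := ⨅ i, LinearMap.ker (φ i).toLinearMap
  have hZ : ∀ v, v ∈ Z ↔ ∀ i, φ i v = 0 := fun v => by simp [Z, Submodule.mem_iInf]
  obtain ⟨G, hGF, hG⟩ := exists_extension_norm_eq Z (F.comp Z.subtypeL)
  have hker : Z ≤ LinearMap.ker (F - G).toLinearMap := fun v hv => by
    simpa [sub_eq_zero] using (hGF ⟨v, hv⟩).symm
  obtain ⟨c, hc⟩ :=
    (Submodule.mem_span_range_iff_exists_fun 𝕜).1 (mem_span_of_iInf_ker_le_ker hker)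
  have hFG : F - ∑ i, c i • φ i = G := by
    ext v
    simpa using congr(F v - $hc v)
  obtain ⟨z, hz1, hz⟩ := (F.comp Z.subtypeL).exists_lt_apply_of_lt_opNorm (hG ▸ hFG ▸ hF c)
  exact ⟨z, hz1.le, (hZ z).1 z.2, hz⟩

theorem exists_norm_eq_one_forall_lt_norm_sub_inclusionInDoubleDual {E : Type*}
    [NormedAddCommGroup E] [NormedSpace 𝕜 E] [CompleteSpace E]
    (h : ¬ Function.Surjective (inclusionInDoubleDual 𝕜 E)) {r : ℝ} (hr : r < 1) :
    ∃ F, ‖F‖ = 1 ∧ ∀ x, r < ‖F - inclusionInDoubleDual 𝕜 E x‖ := by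
  have hJ : Isometry (inclusionInDoubleDual 𝕜 E) := (inclusionInDoubleDualLi 𝕜).isometry
  obtain ⟨F, -, hF1, hF⟩ := riesz_lemma_of_lt_one (𝕜 := 𝕜) (E := StrongDual 𝕜 (StrongDual 𝕜 E))
    (F := LinearMap.range (inclusionInDoubleDual 𝕜 E).toLinearMap)
    (by rw [LinearMap.coe_range]; exact hJ.isClosedEmbedding.isClosed_range)
    (by simpa [Function.Surjective] using h) (by linarith : (r + 1) / 2 < 1)
  exact ⟨F, hF1, fun x =>
    (by linarith : r < (r + 1) / 2).trans_le (hF _ (LinearMap.mem_range_self _ x))⟩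

end Dual

theorem tendsto_apply_zero_of_denseRange {𝕜 E F ι κ : Type*} [NontriviallyNormedField 𝕜]
    [NormedAddCommGroup E] [NormedSpace 𝕜 E] [NormedAddCommGroup F] [NormedSpace 𝕜 F]
    {l : Filter ι} {f : ι → E →L[𝕜] F} {C : ℝ} (hf : ∀ i, ‖f i‖ ≤ C) {d : κ → E}
    (hd : DenseRange d) (h : ∀ k, ∀ᶠ i in l, f i (d k) = 0) (x : E) :
    Tendsto (fun i => f i x) l (𝓝 0) := by
  have hequi : Equicontinuous ((↑) ∘ f) :=
    ((NormedSpace.equicontinuous_TFAE f).out 5 1).1 (⟨C, hf⟩ : ∃ C, ∀ i, ‖f i‖ ≤ C)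
  refine (hequi x).tendsto_of_mem_closure (f := fun _ => 0) tendsto_const_nhds ?_
    (hd.closure_eq ▸ Set.mem_univ x)
  rintro _ ⟨k, rfl⟩
  exact tendsto_const_nhds.congr' ((h k).mono fun i hi => hi.symm)

theorem not_isCGrothendieck_of_separable_nonreflexive_general {X : Type*} [NormedAddCommGroup X]
    [NormedSpace ℝ X] [CompleteSpace X] [TopologicalSpace.SeparableSpace X]
    (hnonrefl : ¬ Function.Surjective (NormedSpace.inclusionInDoubleDual ℝ X))
    (c : ℝ) :
    ¬ IsCGrothendieck c X := by
  obtain ⟨d, hd⟩ := TopologicalSpace.exists_dense_seq X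
  obtain ⟨F, hF1, hF⟩ :=
    exists_norm_eq_one_forall_lt_norm_sub_inclusionInDoubleDual hnonrefl one_half_lt_one
  choose f hf1 hfd hfF using fun n => exists_norm_le_one_forall_eq_zero_lt_norm_apply (r := 1 / 2)
    (fun i : Fin n => inclusionInDoubleDual ℝ X (d i)) fun c => by simpa using hF (∑ i, c i • d i)
  set g : ℕ → StrongDual ℝ X := fun n => if Even n then f n else 0
  have hg1 : ∀ n, ‖g n‖ ≤ 1 := fun n => by by_cases h : Even n <;> simp [g, h, hf1]
  have hgd : ∀ i, ∀ᶠ n in atTop, g n (d i) = 0 := fun i =>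
    (eventually_gt_atTop i).mono fun n hn => by
      simp only [g]
      split_ifs
      exacts [hfd n ⟨i, hn⟩, rfl]
  intro hG
  have hδ := hG g (isBounded_iff_forall_norm_le.2 ⟨1, by rintro _ ⟨n, rfl⟩; exact hg1 n⟩)
  rw [deltaWStar_eq_zero fun x => (tendsto_apply_zero_of_denseRange hg1 hd hgd x).cauchySeq,
    mul_zero] at hδ
  have hosc : 1 / 2 ≤ tailOscillation fun n => F (g n) :=
    le_tailOscillation (M := 1) (fun n => by simpa using F.le_of_opNorm_le_of_le hF1.le (hg1 n))
      fun n => ⟨2 * n, by omega, 2 * n + 1, by omega, by simpa [g] using (hfF (2 * n)).le⟩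
  linarith [tailOscillation_le_deltaW hg1 hF1.le]

/-- A separable nonreflexive Banach space is not `c`-Grothendieck for any `c ≥ 1`. -/
theorem not_isCGrothendieck_of_separable_nonreflexive {X : Type*} [NormedAddCommGroup X]
    [NormedSpace ℝ X] [CompleteSpace X] [TopologicalSpace.SeparableSpace X]
    (hnonrefl : ¬ Function.Surjective (NormedSpace.inclusionInDoubleDual ℝ X))
    (c : ℝ) (hc : 1 ≤ c) :
    ¬ IsCGrothendieck c X :=
  not_isCGrothendieck_of_separable_nonreflexive_general hnonrefl c
end
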